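/- In an n-dimensional hypersphere state space with propensities f_m(x) = (1+⟨m,x⟩)/2 for unit vectors m, the induced distance is d(x,y) = ‖x−y‖/2, and two states are orthogonal (distance 1) if and only if they are antipodal unit vectors (x = −y with ‖x‖ = ‖y‖ = 1). Hence the maximal number of pairwise orthogonal states is 2. -/

import Mathlib

open RealInnerProductSpace

set_option maxHeartbeats 1000000

/-- In the hypersphere state space with propensities f_m(x) = (1+⟨m,x⟩)/2, the induced
distance is d(x,y) = ‖x−y‖/2, orthogonality (d = 1) holds iff the states are antipodal
unit vectors, and the maximal number of pairwise orthogonal states is 2. -/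
theorem stmt16 (n : ℕ) (hn : 1 ≤ n)
    (d : EuclideanSpace ℝ (Fin n) → EuclideanSpace ℝ (Fin n) → ℝ)
    (hd : ∀ x y, d x y =
      sSup ((fun m => (1 + ⟪m, x⟫) / 2 - (1 + ⟪m, y⟫) / 2) ''
        {m : EuclideanSpace ℝ (Fin n) | ‖m‖ = 1})) :
    (∀ x y : EuclideanSpace ℝ (Fin n), ‖x‖ ≤ 1 → ‖y‖ ≤ 1 → d x y = ‖x - y‖ / 2) ∧
    (∀ x y : EuclideanSpace ℝ (Fin n), ‖x‖ ≤ 1 → ‖y‖ ≤ 1 →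
      (d x y = 1 ↔ x = -y ∧ ‖x‖ = 1 ∧ ‖y‖ = 1)) ∧
    (∀ F : Finset (EuclideanSpace ℝ (Fin n)), (∀ x ∈ F, ‖x‖ ≤ 1) →
      (∀ x ∈ F, ∀ y ∈ F, x ≠ y → d x y = 1) → F.card ≤ 2) ∧
    (∃ F : Finset (EuclideanSpace ℝ (Fin n)), (∀ x ∈ F, ‖x‖ ≤ 1) ∧
      (∀ x ∈ F, ∀ y ∈ F, x ≠ y → d x y = 1) ∧ F.card = 2) := by
  classical
  haveI : NeZero n := ⟨by omega⟩
  set e : EuclideanSpace ℝ (Fin n) := EuclideanSpace.single ⟨0, by omega⟩ (1 : ℝ) with he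
  have hen : ‖e‖ = 1 := by simp [he, EuclideanSpace.norm_single]
  -- the key computation of d
  have key : ∀ x y : EuclideanSpace ℝ (Fin n), d x y = ‖x - y‖ / 2 := by
    intro x y
    rw [hd]
    have hset : ((fun m => (1 + ⟪m, x⟫) / 2 - (1 + ⟪m, y⟫) / 2) ''
        {m : EuclideanSpace ℝ (Fin n) | ‖m‖ = 1})
        = (fun m : EuclideanSpace ℝ (Fin n) => ⟪m, x - y⟫ / 2) '' {m | ‖m‖ = 1} := by
      apply Set.image_congr
      intro m _
      rw [inner_sub_right]
      ring
    rw [hset]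
    apply IsGreatest.csSup_eq
    constructor
    · -- the sup is attained
      by_cases hv : x - y = 0
      · refine ⟨e, hen, ?_⟩
        simp [hv]
      · refine ⟨‖x - y‖⁻¹ • (x - y), ?_, ?_⟩
        · have h0 : ‖x - y‖ ≠ 0 := norm_ne_zero_iff.mpr hv
          simp only [Set.mem_setOf_eq, norm_smul, norm_inv, norm_norm]
          exact inv_mul_cancel₀ h0
        · show ⟪‖x - y‖⁻¹ • (x - y), x - y⟫ / 2 = ‖x - y‖ / 2
          rw [real_inner_smul_left, real_inner_self_eq_norm_sq]
          have h0 : ‖x - y‖ ≠ 0 := norm_ne_zero_iff.mpr hv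
          field_simp
    · rintro r ⟨m, hm, rfl⟩
      have := real_inner_le_norm m (x - y)
      rw [Set.mem_setOf_eq] at hm
      rw [hm, one_mul] at this
      linarith
  refine ⟨fun x y _ _ => key x y, ?_, ?_, ?_⟩
  · -- orthogonality iff antipodal unit vectors
    intro x y hx hy
    rw [key]
    constructor
    · intro h
      have hnorm : ‖x - y‖ = 2 := by linarith
      have htri : ‖x - y‖ ≤ ‖x‖ + ‖y‖ := norm_sub_le x y
      have hx1 : ‖x‖ = 1 := by linarith
      have hy1 : ‖y‖ = 1 := by linarith
      have hsq : ‖x - y‖ ^ 2 = ‖x‖ ^ 2 - 2 * ⟪x, y⟫ + ‖y‖ ^ 2 := norm_sub_sq_real x y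
      rw [hnorm, hx1, hy1] at hsq
      have hip : ⟪x, y⟫ = -1 := by nlinarith
      have hadd : ‖x + y‖ ^ 2 = ‖x‖ ^ 2 + 2 * ⟪x, y⟫ + ‖y‖ ^ 2 := norm_add_sq_real x y
      rw [hx1, hy1, hip] at hadd
      have : ‖x + y‖ = 0 := by nlinarith [norm_nonneg (x + y)]
      have hxy : x + y = 0 := norm_eq_zero.mp this
      exact ⟨eq_neg_of_add_eq_zero_left hxy, hx1, hy1⟩
    · rintro ⟨rfl, h1, h2⟩
      have : -y - y = (-2 : ℝ) • y := by module
      rw [this, norm_smul, h2]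
      norm_num
  · -- at most 2 pairwise orthogonal states
    intro F hF horth
    by_contra h
    push_neg at h
    obtain ⟨a, b, c, ha, hb, hc, hab, hac, hbc⟩ := Finset.two_lt_card_iff.mp h
    have h1 := ((key a b ▸ horth a ha b hb hab) : d a b = 1)
    have h2 := ((key a c ▸ horth a ha c hc hac) : d a c = 1)
    have e1 : a = -b := by
      rw [key] at h1
      have hnorm : ‖a - b‖ = 2 := by linarith
      have htri : ‖a - b‖ ≤ ‖a‖ + ‖b‖ := norm_sub_le a b
      have ha1 : ‖a‖ = 1 := by have := hF a ha; have := hF b hb; linarith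
      have hb1 : ‖b‖ = 1 := by have := hF a ha; have := hF b hb; linarith
      have hsq : ‖a - b‖ ^ 2 = ‖a‖ ^ 2 - 2 * ⟪a, b⟫ + ‖b‖ ^ 2 := norm_sub_sq_real a b
      rw [hnorm, ha1, hb1] at hsq
      have hip : ⟪a, b⟫ = -1 := by nlinarith
      have hadd : ‖a + b‖ ^ 2 = ‖a‖ ^ 2 + 2 * ⟪a, b⟫ + ‖b‖ ^ 2 := norm_add_sq_real a b
      rw [ha1, hb1, hip] at hadd
      have : ‖a + b‖ = 0 := by nlinarith [norm_nonneg (a + b)]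
      have hxy : a + b = 0 := norm_eq_zero.mp this
      exact eq_neg_of_add_eq_zero_left hxy
    have e2 : a = -c := by
      rw [key] at h2
      have hnorm : ‖a - c‖ = 2 := by linarith
      have htri : ‖a - c‖ ≤ ‖a‖ + ‖c‖ := norm_sub_le a c
      have ha1 : ‖a‖ = 1 := by have := hF a ha; have := hF c hc; linarith
      have hc1 : ‖c‖ = 1 := by have := hF a ha; have := hF c hc; linarith
      have hsq : ‖a - c‖ ^ 2 = ‖a‖ ^ 2 - 2 * ⟪a, c⟫ + ‖c‖ ^ 2 := norm_sub_sq_real a c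
      rw [hnorm, ha1, hc1] at hsq
      have hip : ⟪a, c⟫ = -1 := by nlinarith
      have hadd : ‖a + c‖ ^ 2 = ‖a‖ ^ 2 + 2 * ⟪a, c⟫ + ‖c‖ ^ 2 := norm_add_sq_real a c
      rw [ha1, hc1, hip] at hadd
      have : ‖a + c‖ = 0 := by nlinarith [norm_nonneg (a + c)]
      have hxy : a + c = 0 := norm_eq_zero.mp this
      exact eq_neg_of_add_eq_zero_left hxy
    exact hbc (neg_injective (e1.symm.trans e2))
  · -- two pairwise orthogonal states exist
    have hne : e ≠ -e := by
      intro h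
      have hee : e + e = 0 := by nth_rewrite 2 [h]; simp
      have he0 : e = 0 := by
        have h2 : (2 : ℝ) • e = 0 := by rw [two_smul]; exact hee
        simpa using smul_eq_zero.mp h2
      rw [he0] at hen
      simp at hen
    refine ⟨{e, -e}, ?_, ?_, ?_⟩
    · intro x hx
      rcases Finset.mem_insert.mp hx with h | h
      · rw [h, hen]
      · rw [Finset.mem_singleton.mp h, norm_neg, hen]
    · intro x hx y hy hxy
      have hd2 : ‖e - -e‖ = 2 := by
        have : e - -e = (2 : ℝ) • e := by module
        rw [this, norm_smul, hen]; norm_num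
      have o1 : d e (-e) = 1 := by rw [key, hd2]; norm_num
      have o2 : d (-e) e = 1 := by rw [key, norm_sub_rev, hd2]; norm_num
      simp only [Finset.mem_insert, Finset.mem_singleton] at hx hy
      rcases hx with rfl | rfl <;> rcases hy with rfl | rfl
      · exact absurd rfl hxy
      · exact o1
      · exact o2
      · exact absurd rfl hxy
    · rw [Finset.card_insert_of_notMem (by simpa using hne), Finset.card_singleton]
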